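/- Correctness of encrypted mask vector updating (Eqn (12) of the paper, combined with Paillier homomorphisms): let N be a natural number and define Enc(x, r) = (1 + N)^x · r^N in ZMod (N^2). Let m ≥ 1, let s : Fin m → ℕ be plaintext shares and α, v : ℕ be such that (∑_i s i) ≡ α (mod N). Then for any randomness r : Fin m → ZMod (N^2), ∏_{i} Enc(s i · v, r i) = Enc((α · v) mod N, ∏_{i} r i); that is, homomorphically summing the encryptions of each share multiplied by v yields an encryption of α · v. -/
import Mathlib


/-- Paillier-style encryption of plaintext `x` with randomness `r`, in `ZMod (N^2)`. -/
def Enc (N : ℕ) (x : ℕ) (r : ZMod (N ^ 2)) : ZMod (N ^ 2) :=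
  ((1 : ZMod (N ^ 2)) + (N : ZMod (N ^ 2))) ^ x * r ^ N

lemma one_add_pow_N (N : ℕ) : ((1 : ZMod (N ^ 2)) + (N : ZMod (N ^ 2))) ^ N = 1 := by
  have h : ((N : ℤ) ^ 2 : ℤ) ∣ (1 + (N : ℤ)) ^ N - 1 ^ N := by
    have := dvd_sub_pow_of_dvd_sub (p := N) (a := 1 + (N : ℤ)) (b := 1)
      (by simp) 1
    simpa using this
  have h2 : (((1 + (N : ℤ)) ^ N : ℤ) : ZMod (N ^ 2)) = ((1 : ℤ) : ZMod (N ^ 2)) := by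
    rw [ZMod.intCast_eq_intCast_iff]
    exact (Int.modEq_iff_dvd.mpr (by push_cast; simpa using h)).symm
  simpa [add_comm] using h2

lemma pow_congr_mod (N x y : ℕ) (h : x ≡ y [MOD N]) :
    ((1 : ZMod (N ^ 2)) + (N : ZMod (N ^ 2))) ^ x
      = ((1 : ZMod (N ^ 2)) + (N : ZMod (N ^ 2))) ^ y := by
  have key : ∀ z : ℕ, ((1 : ZMod (N ^ 2)) + (N : ZMod (N ^ 2))) ^ z
      = ((1 : ZMod (N ^ 2)) + (N : ZMod (N ^ 2))) ^ (z % N) := by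
    intro z
    conv_lhs => rw [← Nat.div_add_mod z N]
    rw [pow_add, pow_mul, one_add_pow_N, one_pow, one_mul]
  rw [key x, key y, h]

theorem encrypted_mask_vector_update_correct (N m : ℕ) (hm : 1 ≤ m)
    (s : Fin m → ℕ) (α v : ℕ) (hshare : (∑ i, s i) ≡ α [MOD N])
    (r : Fin m → ZMod (N ^ 2)) :
    ∏ i, Enc N (s i * v) (r i) = Enc N ((α * v) % N) (∏ i, r i) := by
  unfold Enc
  rw [Finset.prod_mul_distrib, Finset.prod_pow_eq_pow_sum, ← Finset.prod_pow]
  congr 1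
  apply pow_congr_mod
  calc ∑ i, s i * v = (∑ i, s i) * v := by rw [Finset.sum_mul]
    _ ≡ α * v [MOD N] := hshare.mul_right v
    _ ≡ (α * v) % N [MOD N] := (Nat.mod_modEq _ _).symm
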